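/- Let Γ = BiCay(H,R,L,S) be a connected half-arc-transitive bi-Cayley graph over a finite abelian group H. Then R ∪ L is non-empty and contains no involution, |R| = |L| is even, |S| > 2, and the valency |R| + |S| of Γ is at least 6. -/

import Mathlib

open SimpleGraph

def biCay (H : Type*) [Group H] (R L S : Set H) : SimpleGraph (H × Bool) where
  Adj a b := a ≠ b ∧
    ((a.2 = false ∧ b.2 = false ∧ b.1 * a.1⁻¹ ∈ R ∧ a.1 * b.1⁻¹ ∈ R) ∨
     (a.2 = true ∧ b.2 = true ∧ b.1 * a.1⁻¹ ∈ L ∧ a.1 * b.1⁻¹ ∈ L) ∨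
     (a.2 = false ∧ b.2 = true ∧ b.1 * a.1⁻¹ ∈ S) ∨
     (a.2 = true ∧ b.2 = false ∧ a.1 * b.1⁻¹ ∈ S))
  symm := ⟨by rintro a b ⟨hne, h⟩; exact ⟨hne.symm, by tauto⟩⟩
  loopless := ⟨by rintro a ⟨hne, _⟩; exact hne rfl⟩

/-- Right multiplication by `g⁻¹` as an automorphism of the bi-Cayley graph;
the range of this homomorphism is the group `R(H)` of all right translations. -/
def biCayRightMul (H : Type*) [Group H] (R L S : Set H) :
    H →* (biCay H R L S ≃g biCay H R L S) where
  toFun g :=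
    { toEquiv := Equiv.prodCongr (Equiv.mulRight g⁻¹) (Equiv.refl Bool)
      map_rel_iff' := by
        intro a b
        simp only [biCay, Equiv.prodCongr_apply, Equiv.coe_mulRight, Equiv.refl_apply,
          Prod.map, ne_eq, Prod.mk.injEq, Prod.ext_iff]
        constructor
        · rintro ⟨hne, h⟩
          refine ⟨by rintro ⟨h1, h2⟩; exact hne ⟨by rw [h1], h2⟩, ?_⟩
          simpa [mul_assoc] using h
        · rintro ⟨hne, h⟩
          refine ⟨by rintro ⟨h1, h2⟩; exact hne ⟨mul_right_cancel h1, h2⟩, ?_⟩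
          simpa [mul_assoc] using h }
  map_one' := by
    apply RelIso.ext; intro x; simp
  map_mul' g₁ g₂ := by
    apply RelIso.ext; intro x
    simp [RelIso.mul_apply, Prod.map, mul_assoc]

/-- The subgroup `R(H)` of right translations inside `Aut(BiCay(H,R,L,S))`. -/
def biCayRH (H : Type*) [Group H] (R L S : Set H) :
    Subgroup (biCay H R L S ≃g biCay H R L S) :=
  (biCayRightMul H R L S).range

/-!
Since `Γ` is edge-transitive, a single automorphism reversing an edge would make it
arc-transitive, so no automorphism of `Γ` reverses an edge. For abelian `H` such automorphisms are
easy to produce: the right translation by an involution `x ∈ R ∪ L` reverses the edge `{1, x}`;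
if `R = L = ∅`, the map `(h, i) ↦ (s / h, ¬i)` reverses `{1₀, s₁}`; and if `|S| ≤ 2`, say
`S = {s, t}`, then `S` is symmetric about `st`, and a point reflection `h ↦ d / h` on each half
reverses an edge inside one half. The orbit of one arc orients every edge of a half-arc-transitive
graph, with equal in- and out-degrees by double counting, so the valency `|R| + |S|` is even.
Vertex-transitivity gives `|R| + |S| = |L| + |S|`, and inversion pairs off the elements of `R`.
Connectivity forces `S ≠ ∅`. Finally `|R|` and `|R| + |S|` are even with `|R| > 0` and `|S| > 2`,
so `|R| + |S| ≥ 2 + 4`.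
-/

lemma ncard_out_eq_ncard_in_of_regular {α : Type*} [Finite α] (r : α → α → Prop)
    (hout : ∀ a b, {x | r a x}.ncard = {x | r b x}.ncard)
    (hin : ∀ a b, {x | r x a}.ncard = {x | r x b}.ncard) (a : α) :
    {x | r a x}.ncard = {x | r x a}.ncard := by
  classical
  have := Fintype.ofFinite α
  have hcount := Finset.card_mul_eq_card_mul r (s := .univ) (t := .univ)
    (m := {x | r a x}.ncard) (n := {x | r x a}.ncard)
    (fun b _ => by simp [Finset.bipartiteAbove, hout a b, Set.ncard_eq_toFinset_card'])
    (fun b _ => by simp [Finset.bipartiteBelow, hin a b, Set.ncard_eq_toFinset_card'])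
  exact Nat.eq_of_mul_eq_mul_left (Finset.card_pos.2 ⟨a, Finset.mem_univ a⟩) hcount

lemma Set.even_ncard_of_inv_eq_of_mul_self_ne_one {G : Type*} [Group G] {A : Set G}
    [Finite A] (hA : A⁻¹ = A) (hsq : ∀ x ∈ A, x * x ≠ 1) : Even A.ncard := by
  classical
  have := Fintype.ofFinite A
  let σ : Equiv.Perm A := (Equiv.inv G).subtypePerm fun x => by simp [← Set.mem_inv, hA]
  have hσ : σ ^ 2 = 1 := by
    ext
    simp [σ, sq]
  have hsupp : σ.support = Finset.univ := by
    ext ⟨x, hx⟩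
    simpa [σ, inv_eq_iff_mul_eq_one] using hsq x hx
  rw [← Nat.card_coe_set_eq, Nat.card_eq_fintype_card, ← Finset.card_univ, ← hsupp,
    even_iff_two_dvd]
  exact Equiv.Perm.two_dvd_card_support hσ

lemma Set.exists_eq_pair_of_ncard_le_two {α : Type*} {S : Set α} [Finite S] (hS : S.Nonempty)
    (h2 : S.ncard ≤ 2) : ∃ s t, S = {s, t} := by
  have hpos : 0 < S.ncard := (Set.ncard_pos S.toFinite).2 hS
  interval_cases hcard : S.ncard
  · obtain ⟨s, rfl⟩ := Set.ncard_eq_one.1 hcard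
    exact ⟨s, s, by simp⟩
  · obtain ⟨s, t, -, rfl⟩ := Set.ncard_eq_two.1 hcard
    exact ⟨s, t, rfl⟩

namespace SimpleGraph

variable {V : Type*} (G : SimpleGraph V)

def IsVertexTransitive : Prop := ∀ v w : V, ∃ φ : G ≃g G, φ v = w

def IsEdgeTransitive : Prop :=
  ∀ e₁ ∈ G.edgeSet, ∀ e₂ ∈ G.edgeSet, ∃ φ : G ≃g G, Sym2.map ⇑φ e₁ = e₂

def IsArcTransitive : Prop :=
  ∀ a₁ b₁ a₂ b₂ : V, G.Adj a₁ b₁ → G.Adj a₂ b₂ → ∃ φ : G ≃g G, φ a₁ = a₂ ∧ φ b₁ = b₂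

def HasEdgeInvertingAut : Prop := ∃ φ : G ≃g G, ∃ u v, G.Adj u v ∧ φ u = v ∧ φ v = u

def arcOrbit (v w a b : V) : Prop := ∃ φ : G ≃g G, φ v = a ∧ φ w = b

variable {G}

def Iso.ofInvolutive (f : V → V) (hf : Function.Involutive f)
    (hadj : ∀ a b, G.Adj a b → G.Adj (f a) (f b)) : G ≃g G where
  toEquiv := hf.toPerm f
  map_rel_iff' {a b} := ⟨fun h => by simpa only [hf a, hf b] using hadj (f a) (f b) h, hadj a b⟩

lemma IsVertexTransitive.ncard_neighborSet_eq (hVT : G.IsVertexTransitive) (v w : V) :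
    (G.neighborSet v).ncard = (G.neighborSet w).ncard := by
  obtain ⟨φ, rfl⟩ := hVT v w
  simp only [← Nat.card_coe_set_eq]
  exact Nat.card_congr (φ.mapNeighborSet v)

lemma IsEdgeTransitive.exists_iso_of_adj (hET : G.IsEdgeTransitive) {a₁ b₁ a₂ b₂ : V}
    (h₁ : G.Adj a₁ b₁) (h₂ : G.Adj a₂ b₂) :
    ∃ φ : G ≃g G, φ a₁ = a₂ ∧ φ b₁ = b₂ ∨ φ a₁ = b₂ ∧ φ b₁ = a₂ := by
  obtain ⟨φ, hφ⟩ := hET _ (G.mem_edgeSet.2 h₁) _ (G.mem_edgeSet.2 h₂)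
  rw [Sym2.map_mk, Sym2.eq_iff] at hφ
  exact ⟨φ, hφ⟩

lemma IsEdgeTransitive.exists_swap (hET : G.IsEdgeTransitive) (hG : G.HasEdgeInvertingAut)
    {a b : V} (hab : G.Adj a b) : ∃ ψ : G ≃g G, ψ a = b ∧ ψ b = a := by
  obtain ⟨φ, u, v, huv, hu, hv⟩ := hG
  obtain ⟨θ, ⟨ha, hb⟩ | ⟨ha, hb⟩⟩ := hET.exists_iso_of_adj hab huv
  -- `θ⁻¹ φ θ` reverses `{a, b}` whichever way round `θ` maps it onto `{u, v}`.
  all_goals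
    refine ⟨(θ.trans φ).trans θ.symm, ?_⟩
    simp [θ.symm_apply_eq, ha, hb, hu, hv]

lemma IsEdgeTransitive.isArcTransitive (hET : G.IsEdgeTransitive)
    (hG : G.HasEdgeInvertingAut) : G.IsArcTransitive := by
  intro a₁ b₁ a₂ b₂ h₁ h₂
  obtain ⟨χ, ⟨ha, hb⟩ | ⟨ha, hb⟩⟩ := hET.exists_iso_of_adj h₁ h₂
  · exact ⟨χ, ha, hb⟩
  · obtain ⟨ψ, hψa, hψb⟩ := hET.exists_swap hG h₂
    exact ⟨χ.trans ψ, by simp [ha, hb, hψa, hψb]⟩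

lemma arcOrbit_map_iff (ρ : G ≃g G) {v w a b : V} :
    G.arcOrbit v w (ρ a) (ρ b) ↔ G.arcOrbit v w a b := by
  constructor
  · rintro ⟨φ, ha, hb⟩
    exact ⟨φ.trans ρ.symm, by simp [ha], by simp [hb]⟩
  · rintro ⟨φ, rfl, rfl⟩
    exact ⟨φ.trans ρ, rfl, rfl⟩

lemma IsVertexTransitive.ncard_arcOrbit_eq_ncard_arcOrbit_swap [Finite V]
    (hVT : G.IsVertexTransitive) (v w a : V) :
    {x | G.arcOrbit v w a x}.ncard = {x | G.arcOrbit v w x a}.ncard := by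
  refine ncard_out_eq_ncard_in_of_regular _ (fun a b => ?_) (fun a b => ?_) a
  all_goals
    obtain ⟨ρ, rfl⟩ := hVT a b
    simp only [← Nat.card_coe_set_eq]
    exact Nat.card_congr (ρ.toEquiv.subtypeEquiv fun x => (arcOrbit_map_iff ρ).symm)

lemma IsEdgeTransitive.neighborSet_eq_arcOrbit_union (hET : G.IsEdgeTransitive) {v w : V}
    (hvw : G.Adj v w) :
    G.neighborSet v = {x | G.arcOrbit v w v x} ∪ {x | G.arcOrbit v w x v} := by
  ext x
  constructor
  · intro hx
    obtain ⟨φ, h | h⟩ := hET.exists_iso_of_adj hvw hx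
    · exact Or.inl ⟨φ, h⟩
    · exact Or.inr ⟨φ, h⟩
  · rintro (⟨φ, h₁, h₂⟩ | ⟨φ, h₁, h₂⟩)
    · exact h₁ ▸ h₂ ▸ φ.map_adj_iff.2 hvw
    · exact (h₁ ▸ h₂ ▸ φ.map_adj_iff.2 hvw).symm

lemma hasEdgeInvertingAut_of_arcOrbit_of_arcOrbit {v w a b : V} (hvw : G.Adj v w)
    (hab : G.arcOrbit v w a b) (hba : G.arcOrbit v w b a) : G.HasEdgeInvertingAut := by
  obtain ⟨φ, rfl, rfl⟩ := hab
  obtain ⟨ψ, h₁, h₂⟩ := hba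
  exact ⟨φ.symm.trans ψ, φ v, φ w, φ.map_adj_iff.2 hvw, by simp [h₁], by simp [h₂]⟩

lemma even_ncard_neighborSet [Finite V] (hVT : G.IsVertexTransitive)
    (hET : G.IsEdgeTransitive) (hAT : ¬ G.IsArcTransitive) (v : V) :
    Even (G.neighborSet v).ncard := by
  obtain hv | ⟨w, hvw⟩ := (G.neighborSet v).eq_empty_or_nonempty
  · simp [hv]
  have hdisj : Disjoint {x | G.arcOrbit v w v x} {x | G.arcOrbit v w x v} :=
    Set.disjoint_left.2 fun x h₁ h₂ =>
      hAT (hET.isArcTransitive (hasEdgeInvertingAut_of_arcOrbit_of_arcOrbit hvw h₁ h₂))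
  rw [hET.neighborSet_eq_arcOrbit_union hvw, Set.ncard_union_eq hdisj,
    hVT.ncard_arcOrbit_eq_ncard_arcOrbit_swap]
  exact ⟨_, rfl⟩

end SimpleGraph

section BiCay

variable {H : Type*} [Group H] {R L S : Set H} {h k : H}

@[simp]
lemma biCay_adj_false_false :
    (biCay H R L S).Adj (h, false) (k, false) ↔ h ≠ k ∧ k / h ∈ R ∧ h / k ∈ R := by
  simp [biCay, div_eq_mul_inv]

@[simp]
lemma biCay_adj_true_true :
    (biCay H R L S).Adj (h, true) (k, true) ↔ h ≠ k ∧ k / h ∈ L ∧ h / k ∈ L := by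
  simp [biCay, div_eq_mul_inv]

@[simp]
lemma biCay_adj_false_true : (biCay H R L S).Adj (h, false) (k, true) ↔ k / h ∈ S := by
  simp [biCay, div_eq_mul_inv]

@[simp]
lemma biCay_adj_true_false : (biCay H R L S).Adj (h, true) (k, false) ↔ h / k ∈ S := by
  simp [biCay, div_eq_mul_inv]

lemma biCay_adj_one_false_iff (hR : R⁻¹ = R) (h1R : (1 : H) ∉ R) :
    (biCay H R L S).Adj (1, false) (k, false) ↔ k ∈ R := by
  rw [biCay_adj_false_false, div_one, one_div, ← Set.mem_inv, hR]
  exact ⟨fun h => h.2.1, fun hk => ⟨(ne_of_mem_of_not_mem hk h1R).symm, hk, hk⟩⟩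

lemma biCay_adj_one_true_iff (hL : L⁻¹ = L) (h1L : (1 : H) ∉ L) :
    (biCay H R L S).Adj (1, true) (k, true) ↔ k ∈ L := by
  rw [biCay_adj_true_true, div_one, one_div, ← Set.mem_inv, hL]
  exact ⟨fun h => h.2.1, fun hk => ⟨(ne_of_mem_of_not_mem hk h1L).symm, hk, hk⟩⟩

lemma biCay_neighborSet_one_false (hR : R⁻¹ = R) (h1R : (1 : H) ∉ R) :
    (biCay H R L S).neighborSet (1, false) = (·, false) '' R ∪ (·, true) '' S := by
  ext ⟨k, _ | _⟩ <;> simp [biCay_adj_one_false_iff hR h1R]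

lemma biCay_neighborSet_one_true (hL : L⁻¹ = L) (h1L : (1 : H) ∉ L) :
    (biCay H R L S).neighborSet (1, true) = (·, false) '' S⁻¹ ∪ (·, true) '' L := by
  ext ⟨k, _ | _⟩ <;> simp [biCay_adj_one_true_iff hL h1L]

lemma ncard_image_mk_false_union_image_mk_true {α : Type*} [Finite α] (A B : Set α) :
    ((·, false) '' A ∪ (·, true) '' B).ncard = A.ncard + B.ncard := by
  rw [Set.ncard_union_eq (by simp [Set.disjoint_left]),
    Set.ncard_image_of_injective _ (Prod.mk_left_injective _),
    Set.ncard_image_of_injective _ (Prod.mk_left_injective _)]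

lemma ncard_biCay_neighborSet_one_false [Finite H] (hR : R⁻¹ = R) (h1R : (1 : H) ∉ R) :
    ((biCay H R L S).neighborSet (1, false)).ncard = R.ncard + S.ncard := by
  rw [biCay_neighborSet_one_false hR h1R, ncard_image_mk_false_union_image_mk_true]

lemma ncard_biCay_neighborSet_one_true [Finite H] (hL : L⁻¹ = L) (h1L : (1 : H) ∉ L) :
    ((biCay H R L S).neighborSet (1, true)).ncard = S.ncard + L.ncard := by
  rw [biCay_neighborSet_one_true hL h1L, ncard_image_mk_false_union_image_mk_true,
    Set.ncard_inv]

lemma nonempty_of_connected_biCay (hconn : (biCay H R L S).Connected) : S.Nonempty := by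
  by_contra hS
  obtain rfl := Set.not_nonempty_iff_eq_empty.1 hS
  have hpart : ∀ {a b : H × Bool}, (biCay H R L ∅).Reachable a b → a.2 = b.2 := by
    rintro a b ⟨p⟩
    induction p with
    | nil => rfl
    | @cons a c _ hadj _ ih =>
      obtain ⟨a, _ | _⟩ := a <;> obtain ⟨c, _ | _⟩ := c <;> simp_all
  simpa using hpart (hconn (1, false) (1, true))

@[simp]
lemma biCayRightMul_apply (g : H) (p : H × Bool) :
    biCayRightMul H R L S g p = (p.1 * g⁻¹, p.2) :=
  rfl

lemma hasEdgeInvertingAut_biCay_of_mul_self_eq_one (hR : R⁻¹ = R) (hL : L⁻¹ = L)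
    (h1R : (1 : H) ∉ R) (h1L : (1 : H) ∉ L) {x : H} (hx : x ∈ R ∪ L) (hxx : x * x = 1) :
    (biCay H R L S).HasEdgeInvertingAut := by
  have hx' : x⁻¹ = x := inv_eq_of_mul_eq_one_right hxx
  rcases hx with hx | hx
  · exact ⟨biCayRightMul H R L S x, (1, false), (x, false),
      (biCay_adj_one_false_iff hR h1R).2 hx, by simp [hx'], by simp⟩
  · exact ⟨biCayRightMul H R L S x, (1, true), (x, true),
      (biCay_adj_one_true_iff hL h1L).2 hx, by simp [hx'], by simp⟩

end BiCay

section AbelianBiCay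

variable {H : Type*} [CommGroup H] {R L S : Set H}

def biCaySwap (R S : Set H) (s : H) : biCay H R R S ≃g biCay H R R S :=
  Iso.ofInvolutive (fun p => (s / p.1, !p.2)) (fun p => by simp) <| by
    rintro ⟨h, _ | _⟩ ⟨k, _ | _⟩ <;>
      simp only [biCay_adj_false_false, biCay_adj_true_true, biCay_adj_false_true,
        biCay_adj_true_false, Bool.not_false, Bool.not_true, ne_eq, div_right_inj,
        div_div_div_cancel_left] <;>
      tauto

def biCayFlip (d₀ d₁ : H) (hS : ∀ u ∈ S, d₁ / d₀ / u ∈ S) :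
    biCay H R L S ≃g biCay H R L S :=
  Iso.ofInvolutive (fun p => ((bif p.2 then d₁ else d₀) / p.1, p.2))
    (fun ⟨h, i⟩ => by cases i <;> simp) <| by
    rintro ⟨h, _ | _⟩ ⟨k, _ | _⟩ <;>
      simp only [biCay_adj_false_false, biCay_adj_true_true, biCay_adj_false_true,
        biCay_adj_true_false, cond_false, cond_true, ne_eq, div_right_inj, div_div_div_cancel_left]
    · tauto
    · exact fun hs => div_div_div_comm d₁ k d₀ h ▸ hS _ hs
    · exact fun hs => div_div_div_comm d₁ h d₀ k ▸ hS _ hs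
    · tauto

@[simp]
lemma biCaySwap_apply (s : H) (p : H × Bool) : biCaySwap R S s p = (s / p.1, !p.2) :=
  rfl

@[simp]
lemma biCayFlip_apply (d₀ d₁ : H) (hS : ∀ u ∈ S, d₁ / d₀ / u ∈ S) (p : H × Bool) :
    biCayFlip (R := R) (L := L) d₀ d₁ hS p = ((bif p.2 then d₁ else d₀) / p.1, p.2) :=
  rfl

lemma hasEdgeInvertingAut_biCay_self (hS : S.Nonempty) :
    (biCay H R R S).HasEdgeInvertingAut := by
  obtain ⟨s, hs⟩ := hS
  exact ⟨biCaySwap R S s, (1, false), (s, true), by simpa using hs, by simp, by simp⟩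

lemma hasEdgeInvertingAut_biCay_pair (hR : R⁻¹ = R) (hL : L⁻¹ = L)
    (h1R : (1 : H) ∉ R) (h1L : (1 : H) ∉ L) {z : H} (hz : z ∈ R ∪ L) (s t : H) :
    (biCay H R L {s, t}).HasEdgeInvertingAut := by
  rcases hz with hz | hz
  · exact ⟨biCayFlip z (s * t * z) (by simp), (1, false), (z, false),
      (biCay_adj_one_false_iff hR h1R).2 hz, by simp, by simp⟩
  · exact ⟨biCayFlip (z / (s * t)) z (by simp), (1, true), (z, true),
      (biCay_adj_one_true_iff hL h1L).2 hz, by simp, by simp⟩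

end AbelianBiCay

/-- If `Γ = BiCay(H,R,L,S)` is a connected half-arc-transitive
bi-Cayley graph over a finite abelian group `H` (vertex- and edge-transitive but not
arc-transitive), then `R ∪ L` is non-empty and contains no involution, `|R| = |L|` is
even, `|S| > 2`, and the valency `|R| + |S|` of `Γ` is at least 6. -/
theorem biCay_abelian_half_arc_transitive
    {H : Type*} [CommGroup H] [Finite H] (R L S : Set H)
    (hR : R⁻¹ = R) (hL : L⁻¹ = L) (h1 : (1 : H) ∉ R ∪ L)
    (hconn : (biCay H R L S).Connected)
    (hVT : ∀ v w : H × Bool, ∃ φ : biCay H R L S ≃g biCay H R L S, φ v = w)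
    (hET : ∀ e₁ ∈ (biCay H R L S).edgeSet, ∀ e₂ ∈ (biCay H R L S).edgeSet,
      ∃ φ : biCay H R L S ≃g biCay H R L S, Sym2.map ⇑φ e₁ = e₂)
    (hnAT : ¬ (∀ a₁ b₁ a₂ b₂ : H × Bool,
      (biCay H R L S).Adj a₁ b₁ → (biCay H R L S).Adj a₂ b₂ →
      ∃ φ : biCay H R L S ≃g biCay H R L S, φ a₁ = a₂ ∧ φ b₁ = b₂)) :
    (R ∪ L).Nonempty ∧ (∀ x ∈ R ∪ L, x * x ≠ 1) ∧
    Nat.card R = Nat.card L ∧ Even (Nat.card R) ∧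
    2 < Nat.card S ∧ 6 ≤ Nat.card R + Nat.card S := by
  obtain ⟨h1R, h1L⟩ := not_or.1 h1
  have hnInv : ¬ (biCay H R L S).HasEdgeInvertingAut := fun h =>
    hnAT (IsEdgeTransitive.isArcTransitive hET h)
  obtain ⟨s, hs⟩ := nonempty_of_connected_biCay hconn
  have hRL : (R ∪ L).Nonempty := by
    by_contra hRL
    obtain ⟨rfl, rfl⟩ := Set.union_empty_iff.1 (Set.not_nonempty_iff_eq_empty.1 hRL)
    exact hnInv (hasEdgeInvertingAut_biCay_self ⟨s, hs⟩)
  have hsq : ∀ x ∈ R ∪ L, x * x ≠ 1 := fun x hx hxx =>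
    hnInv (hasEdgeInvertingAut_biCay_of_mul_self_eq_one hR hL h1R h1L hx hxx)
  have hRL_card : R.ncard = L.ncard := by
    have := IsVertexTransitive.ncard_neighborSet_eq hVT (1, false) (1, true)
    rw [ncard_biCay_neighborSet_one_false hR h1R, ncard_biCay_neighborSet_one_true hL h1L] at this
    omega
  have hR_even : Even R.ncard :=
    Set.even_ncard_of_inv_eq_of_mul_self_ne_one hR fun x hx => hsq x (.inl hx)
  have hS : 2 < S.ncard := by
    by_contra! hS
    obtain ⟨s, t, rfl⟩ := Set.exists_eq_pair_of_ncard_le_two ⟨s, hs⟩ hS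
    obtain ⟨z, hz⟩ := hRL
    exact hnInv (hasEdgeInvertingAut_biCay_pair hR hL h1R h1L hz s t)
  have hR_pos : 0 < R.ncard := by
    obtain ⟨z, hz | hz⟩ := hRL
    · exact (Set.ncard_pos R.toFinite).2 ⟨z, hz⟩
    · exact hRL_card ▸ (Set.ncard_pos L.toFinite).2 ⟨z, hz⟩
  have hdeg := even_ncard_neighborSet hVT hET hnAT (1, false)
  rw [ncard_biCay_neighborSet_one_false hR h1R] at hdeg
  simp only [Nat.card_coe_set_eq]
  refine ⟨hRL, hsq, hRL_card, hR_even, hS, ?_⟩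
  obtain ⟨a, ha⟩ := hR_even
  obtain ⟨b, hb⟩ := hdeg
  omega
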